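/- In the m-diagram of a three-row standard Young tableau, any two distinct ms are in one of five relative positions: if (i,j,k) and (i′,j′,k′) are distinct ms with i < i′, then one of the following orderings holds: (1) i<j<k<i′<j′<k′; (2) i<i′<j′<k′<j<k; (3) i<j<i′<j′<k′<k; (4) i<i′<j′<j<k<k′; (5) i<j<i′<k<j′<k′. -/

import Mathlib

open scoped Classical

/-- The `j`-th smallest element (0-indexed) of a finite set of naturals (default `0`). -/
noncomputable def nthSmallest (s : Finset ℕ) (j : ℕ) : ℕ := (s.sort (· ≤ ·)).getD j 0

/-- `(R, S)` satisfies the tableau condition: `|S| ≤ |R|` and for every `j ≤ |S|`, the `j`-th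
smallest element of `S` is greater than the `j`-th smallest element of `R`. -/
def TableauCond (R S : Finset ℕ) : Prop :=
  S.card ≤ R.card ∧ ∀ j < S.card, nthSmallest R j < nthSmallest S j

/-- The greedy matching of `S` into `R`: processing the elements `i` of `S` in increasing
order, `greedy R S i = max { j ∈ R : j < i and j ≠ greedy R S i' for every i' ∈ S with i' < i }`
(with value `0` when this set is empty or `i ∉ S`). -/
noncomputable def greedy (R S : Finset ℕ) (i : ℕ) : ℕ :=
  Nat.strongRecOn i fun i ih =>
    ((R.filter fun j => j < i ∧ ∀ i' (_ : i' ∈ S) (h : i' < i), j ≠ ih i' h).max).unbotD 0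

/-- The arcs produced by the greedy matching of `S` into `R`, as ordered pairs
`(left endpoint, right endpoint)`. -/
noncomputable def arcsOf (R S : Finset ℕ) : Finset (ℕ × ℕ) :=
  S.image fun i => (greedy R S i, i)

/-- `(B, M, T)` (bottom, middle, top rows) encodes a three-row standard Young tableau with
`N` boxes: the rows partition `{1,…,N}`, row lengths weakly decrease from bottom to top, and
consecutive rows satisfy the tableau condition. -/
def ThreeRowSYT (N : ℕ) (B M T : Finset ℕ) : Prop :=
  Disjoint B M ∧ Disjoint B T ∧ Disjoint M T ∧
  B ∪ M ∪ T = Finset.Icc 1 N ∧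
  T.card ≤ M.card ∧ M.card ≤ B.card ∧
  TableauCond B M ∧ TableauCond M T

/-- Two arcs `(p,q)` and `(p',q')` (with `p<q`, `p'<q'`) cross if `p<p'<q<q'` or
`p'<p<q'<q`. -/
def Cross (a b : ℕ × ℕ) : Prop :=
  (a.1 < b.1 ∧ b.1 < a.2 ∧ a.2 < b.2) ∨ (b.1 < a.1 ∧ a.1 < b.2 ∧ b.2 < a.2)

/-- `(i,j,k)` is an m of the m-diagram of the three-row tableau `(B,M,T)`. -/
def IsM (B M T : Finset ℕ) (i j k : ℕ) : Prop :=
  j ∈ M ∧ i = greedy B M j ∧ k ∈ T ∧ greedy M T k = j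

/-!
A greedy matching of `S` into `R` is non-crossing: if `q < q'` in `S` and the arc ending at
`q'` starts below `q`, then its left end was still available when `q` was processed, so the
greedy choice at `q` is at least as large, and it is different since it was used before `q'`.
The arcs are well defined because the tableau condition puts more elements of `R` than of `S`
below every `i ∈ S`. Applied to the first arcs `(i,j), (i',j')` and to the second arcs
`(j,k), (j',k')`, together with `k ≠ i'` (different rows), non-crossing leaves exactly the five
configurations.
-/

open Finset

lemma finite_ofPred_mem (s : Finset ℕ) : (Set.ofPred (· ∈ s)).Finite := s.finite_toSet

lemma nthSmallest_eq_nth (s : Finset ℕ) (j : ℕ) : nthSmallest s j = Nat.nth (· ∈ s) j := by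
  rw [Nat.nth_eq_getD_sort (finite_ofPred_mem s), nthSmallest]
  congr
  ext; simp [Set.ofPred]

lemma card_filter_lt_eq_count (s : Finset ℕ) (i : ℕ) : #{x ∈ s | x < i} = Nat.count (· ∈ s) i := by
  rw [Nat.count_eq_card_filter_range]
  congr 1
  ext x
  simp [and_comm]

lemma TableauCond.card_filter_lt_lt_card_filter_lt {R S : Finset ℕ} (hRS : TableauCond R S)
    {i : ℕ} (hi : i ∈ S) : #{s ∈ S | s < i} < #{r ∈ R | r < i} := by
  rw [card_filter_lt_eq_count, card_filter_lt_eq_count]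
  set n := Nat.count (· ∈ S) i
  have hnS : n < #S := by simpa [Set.ofPred] using Nat.count_lt_card (finite_ofPred_mem S) hi
  have hnR : n < #(finite_ofPred_mem R).toFinset := by simpa [Set.ofPred] using hnS.trans_le hRS.1
  have hnth : Nat.nth (· ∈ R) n < i := by
    have h := hRS.2 n hnS
    rwa [nthSmallest_eq_nth, nthSmallest_eq_nth, Nat.nth_count hi] at h
  calc n < Nat.count (· ∈ R) (Nat.nth (· ∈ R) n + 1) := by
        rw [Nat.count_succ, Nat.count_nth_of_lt_card_finite _ hnR,
          if_pos (Nat.nth_mem_of_lt_card _ hnR)]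
        omega
    _ ≤ Nat.count (· ∈ R) i := Nat.count_monotone _ hnth

noncomputable def greedyAvailable (R S : Finset ℕ) (i : ℕ) : Finset ℕ :=
  {r ∈ R | r < i} \ {s ∈ S | s < i}.image (greedy R S)

section greedy

variable {R S : Finset ℕ} {i r : ℕ}

lemma mem_greedyAvailable :
    r ∈ greedyAvailable R S i ↔ r ∈ R ∧ r < i ∧ ∀ s ∈ S, s < i → greedy R S s ≠ r := by
  simp [greedyAvailable, and_assoc]

lemma greedy_eq_max_greedyAvailable (R S : Finset ℕ) (i : ℕ) :
    greedy R S i = (greedyAvailable R S i).max.unbotD 0 := by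
  rw [greedy, Nat.strongRecOn_eq]
  congr 2
  ext r
  simp only [mem_filter, mem_greedyAvailable, ne_comm, greedy]

lemma le_greedy_of_mem_greedyAvailable (hr : r ∈ greedyAvailable R S i) : r ≤ greedy R S i := by
  obtain ⟨m, hm⟩ := Finset.max_of_mem hr
  rw [greedy_eq_max_greedyAvailable, hm]
  exact WithBot.coe_le_coe.mp (hm ▸ Finset.le_max hr)

lemma TableauCond.greedy_mem_greedyAvailable (hRS : TableauCond R S) (hi : i ∈ S) :
    greedy R S i ∈ greedyAvailable R S i := by
  have hne : (greedyAvailable R S i).Nonempty := by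
    rw [← card_pos]
    have hsdiff := le_card_sdiff ({s ∈ S | s < i}.image (greedy R S)) {r ∈ R | r < i}
    have himage := card_image_le (s := {s ∈ S | s < i}) (f := greedy R S)
    have hcount := hRS.card_filter_lt_lt_card_filter_lt hi
    unfold greedyAvailable
    omega
  obtain ⟨m, hm⟩ := Finset.max_of_nonempty hne
  rw [greedy_eq_max_greedyAvailable, hm]
  exact mem_of_max hm

lemma TableauCond.greedy_mem (hRS : TableauCond R S) (hi : i ∈ S) : greedy R S i ∈ R :=
  (mem_greedyAvailable.mp (hRS.greedy_mem_greedyAvailable hi)).1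

lemma TableauCond.greedy_lt (hRS : TableauCond R S) (hi : i ∈ S) : greedy R S i < i :=
  (mem_greedyAvailable.mp (hRS.greedy_mem_greedyAvailable hi)).2.1

lemma TableauCond.greedy_lt_greedy_of_greedy_lt (hRS : TableauCond R S) {q q' : ℕ}
    (hq : q ∈ S) (hq' : q' ∈ S) (hqq' : q < q') (h : greedy R S q' < q) :
    greedy R S q' < greedy R S q := by
  obtain ⟨hR, -, hunused⟩ := mem_greedyAvailable.mp (hRS.greedy_mem_greedyAvailable hq')
  have hle : greedy R S q' ≤ greedy R S q := le_greedy_of_mem_greedyAvailable <|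
    mem_greedyAvailable.mpr ⟨hR, h, fun s hs hsq => hunused s hs (hsq.trans hqq')⟩
  exact hle.lt_of_ne (hunused q hq hqq').symm

lemma TableauCond.lt_greedy_or_greedy_lt_greedy (hRS : TableauCond R S) (hRS' : Disjoint R S)
    {q q' : ℕ} (hq : q ∈ S) (hq' : q' ∈ S) (hqq' : q < q') :
    q < greedy R S q' ∨ greedy R S q' < greedy R S q := by
  have hne : greedy R S q' ≠ q := fun h => disjoint_left.mp hRS' (hRS.greedy_mem hq') (h ▸ hq)
  rcases hne.lt_or_gt with h | h
  · exact .inr (hRS.greedy_lt_greedy_of_greedy_lt hq hq' hqq' h)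
  · exact .inl h

end greedy

theorem two_ms_five_relative_positions_general (N : ℕ) (B M T : Finset ℕ)
    (h : ThreeRowSYT N B M T) (i j k i' j' k' : ℕ)
    (hm : IsM B M T i j k) (hm' : IsM B M T i' j' k')
    (hii' : i < i') :
    (i < j ∧ j < k ∧ k < i' ∧ i' < j' ∧ j' < k') ∨
    (i < i' ∧ i' < j' ∧ j' < k' ∧ k' < j ∧ j < k) ∨
    (i < j ∧ j < i' ∧ i' < j' ∧ j' < k' ∧ k' < k) ∨
    (i < i' ∧ i' < j' ∧ j' < j ∧ j < k ∧ k < k') ∨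
    (i < j ∧ j < i' ∧ i' < k ∧ k < j' ∧ j' < k') := by
  obtain ⟨hBM, hBT, hMT, -, -, -, hBM_tab, hMT_tab⟩ := h
  obtain ⟨hj, hi, hk, hkj⟩ := hm
  obtain ⟨hj', hi', hk', hkj'⟩ := hm'
  have hij : i < j := hi ▸ hBM_tab.greedy_lt hj
  have hij' : i' < j' := hi' ▸ hBM_tab.greedy_lt hj'
  have hjk : j < k := hkj ▸ hMT_tab.greedy_lt hk
  have hjk' : j' < k' := hkj' ▸ hMT_tab.greedy_lt hk'
  have hjj' : j ≠ j' := by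
    rintro rfl
    exact hii'.ne (hi.trans hi'.symm)
  have hkk' : k ≠ k' := by
    rintro rfl
    exact hjj' (hkj.symm.trans hkj')
  have hki' : k ≠ i' := fun h => disjoint_left.mp hBT (hi' ▸ hBM_tab.greedy_mem hj') (h ▸ hk)
  have hBM_arcs : j < j' → j < i' ∨ i' < i := fun hlt => by
    simpa only [← hi, ← hi'] using hBM_tab.lt_greedy_or_greedy_lt_greedy hBM hj hj' hlt
  have hMT_arcs : k < k' → k < j' ∨ j' < j := fun hlt => by
    simpa only [hkj, hkj'] using hMT_tab.lt_greedy_or_greedy_lt_greedy hMT hk hk' hlt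
  have hMT_arcs' : k' < k → k' < j ∨ j < j' := fun hlt => by
    simpa only [hkj, hkj'] using hMT_tab.lt_greedy_or_greedy_lt_greedy hMT hk' hk hlt
  omega

/-- Any two distinct ms of the m-diagram of a three-row standard Young tableau are in one
of five relative positions. -/
theorem two_ms_five_relative_positions (N : ℕ) (B M T : Finset ℕ)
    (h : ThreeRowSYT N B M T) (i j k i' j' k' : ℕ)
    (hm : IsM B M T i j k) (hm' : IsM B M T i' j' k')
    (hne : (i, j, k) ≠ (i', j', k')) (hii' : i < i') :
    (i < j ∧ j < k ∧ k < i' ∧ i' < j' ∧ j' < k') ∨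
    (i < i' ∧ i' < j' ∧ j' < k' ∧ k' < j ∧ j < k) ∨
    (i < j ∧ j < i' ∧ i' < j' ∧ j' < k' ∧ k' < k) ∨
    (i < i' ∧ i' < j' ∧ j' < j ∧ j < k ∧ k < k') ∨
    (i < j ∧ j < i' ∧ i' < k ∧ k < j' ∧ j' < k') :=
  two_ms_five_relative_positions_general N B M T h i j k i' j' k' hm hm' hii'
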